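/- Let Ω = (0,1) and Ã(d) = 1 − d (extended evenly). Then for all u, v ∈ C_c^∞(Ω): ∫_0^1∫_0^1 (1 − |x−y|) u'(x) v'(y) dy dx = 2 ∫_0^1 u(x) v(x) dx; in particular the completion V_A of C_c^∞(Ω) under ‖·‖_A is isometrically isomorphic to 2^{−1/2} L^2(Ω), and for C = 1 the problem a(u,v) = (f,v)_{L²} for all v has the unique solution u = f/2 for every f ∈ L^2(Ω). -/

import Mathlib

open MeasureTheory RealInnerProductSpace

noncomputable section

/-- Smooth compactly supported scalar function with support inside Ω. -/
def IsTest1D (Ω : Set ℝ) (u : ℝ → ℝ) : Prop :=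
  ContDiff ℝ (⊤ : ℕ∞) u ∧ HasCompactSupport u ∧ tsupport u ⊆ Ω

lemma test_boundary {u : ℝ → ℝ} (hu : IsTest1D (Set.Ioo 0 1) u) : u 0 = 0 ∧ u 1 = 0 := by
  constructor <;> apply image_eq_zero_of_notMem_tsupport <;> intro h <;>
    have := hu.2.2 h <;> simp [Set.mem_Ioo] at this

/-- Inner integration by parts. -/
lemma inner_ibp {v : ℝ → ℝ} (hv : IsTest1D (Set.Ioo 0 1) v) {x : ℝ}
    (hx : x ∈ Set.Icc (0:ℝ) 1) :
    ∫ y in Set.Ioo (0:ℝ) 1, (1 - |x - y|) * deriv v y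
      = (∫ y in x..(1:ℝ), v y) - ∫ y in (0:ℝ)..x, v y := by
  obtain ⟨hx0, hx1⟩ := hx
  have hvc : Continuous v := hv.1.continuous
  have hvd : Continuous (deriv v) := hv.1.continuous_deriv (by simp)
  have hv0 : v 0 = 0 := (test_boundary hv).1
  have hv1 : v 1 = 0 := (test_boundary hv).2
  have hker : Continuous fun y => (1 - |x - y|) * deriv v y := by
    fun_prop
  have hderiv : ∀ y : ℝ, HasDerivAt v (deriv v y) y :=
    fun y => (hv.1.differentiable (by simp) y).hasDerivAt
  -- convert set integral to interval integral and split at x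
  rw [← integral_Ioc_eq_integral_Ioo, ← intervalIntegral.integral_of_le (by norm_num : (0:ℝ) ≤ 1),
    ← intervalIntegral.integral_add_adjacent_intervals (b := x)
      (hker.intervalIntegrable 0 x) (hker.intervalIntegrable x 1)]
  have huIcc0 : Set.uIcc (0:ℝ) x = Set.Icc 0 x := Set.uIcc_of_le hx0
  have huIcc1 : Set.uIcc x (1:ℝ) = Set.Icc x 1 := Set.uIcc_of_le hx1
  -- left piece
  have hleft : (∫ y in (0:ℝ)..x, (1 - |x - y|) * deriv v y)
      = v x - ∫ y in (0:ℝ)..x, v y := by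
    have hcong : ∫ y in (0:ℝ)..x, (1 - |x - y|) * deriv v y
        = ∫ y in (0:ℝ)..x, (1 - (x - y)) * deriv v y := by
      apply intervalIntegral.integral_congr
      intro y hy
      rw [huIcc0] at hy
      show (1 - |x - y|) * deriv v y = _
      rw [abs_of_nonneg (by linarith [hy.2])]
    rw [hcong]
    have := intervalIntegral.integral_mul_deriv_eq_deriv_mul
      (u := fun y => 1 - (x - y)) (u' := fun _ => (1:ℝ)) (v := v) (v' := deriv v)
      (a := 0) (b := x)
      (fun y _ => by simpa using ((hasDerivAt_id y).const_sub x).const_sub 1)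
      (fun y _ => hderiv y)
      (continuous_const.intervalIntegrable 0 x)
      (hvd.intervalIntegrable 0 x)
    simp only [sub_self, sub_zero, hv0, mul_zero, one_mul] at this
    rw [this]
  -- right piece
  have hright : (∫ y in x..(1:ℝ), (1 - |x - y|) * deriv v y)
      = -v x + ∫ y in x..(1:ℝ), v y := by
    have hcong : ∫ y in x..(1:ℝ), (1 - |x - y|) * deriv v y
        = ∫ y in x..(1:ℝ), (1 - (y - x)) * deriv v y := by
      apply intervalIntegral.integral_congr
      intro y hy
      rw [huIcc1] at hy
      show (1 - |x - y|) * deriv v y = _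
      rw [abs_of_nonpos (by linarith [hy.1]), neg_sub]
    rw [hcong]
    have := intervalIntegral.integral_mul_deriv_eq_deriv_mul
      (u := fun y => 1 - (y - x)) (u' := fun _ => (-1:ℝ)) (v := v) (v' := deriv v)
      (a := x) (b := 1)
      (fun y _ => by simpa using (((hasDerivAt_id y).sub_const x).const_sub 1))
      (fun y _ => hderiv y)
      (continuous_const.intervalIntegrable x 1)
      (hvd.intervalIntegrable x 1)
    simp only [hv1, mul_zero, sub_self, sub_zero] at this
    rw [this, intervalIntegral.integral_congr (g := fun y => -(v y)) (fun y _ => by ring),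
      intervalIntegral.integral_neg]
    ring_nf
  rw [hleft, hright]
  ring

/-- The bilinear identity. -/
lemma bilinear_identity {u v : ℝ → ℝ} (hu : IsTest1D (Set.Ioo 0 1) u)
    (hv : IsTest1D (Set.Ioo 0 1) v) :
    ∫ x in Set.Ioo (0:ℝ) 1, ∫ y in Set.Ioo (0:ℝ) 1,
        (1 - |x - y|) * deriv u x * deriv v y
      = 2 * ∫ x in Set.Ioo (0:ℝ) 1, u x * v x := by
  have huc : Continuous u := hu.1.continuous
  have hvc : Continuous v := hv.1.continuous
  have hud : Continuous (deriv u) := hu.1.continuous_deriv (by simp)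
  have hu0 : u 0 = 0 := (test_boundary hu).1
  have hu1 : u 1 = 0 := (test_boundary hu).2
  have hderivu : ∀ x : ℝ, HasDerivAt u (deriv u x) x :=
    fun x => (hu.1.differentiable (by simp) x).hasDerivAt
  set g : ℝ → ℝ := fun x => (∫ y in x..(1:ℝ), v y) - ∫ y in (0:ℝ)..x, v y with hgdef
  have hg : ∀ x : ℝ, HasDerivAt g (-v x - v x) x := by
    intro x
    have h1 : HasDerivAt (fun t => ∫ y in (0:ℝ)..t, v y) (v x) x :=
      intervalIntegral.integral_hasDerivAt_right (hvc.intervalIntegrable 0 x)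
        (hvc.stronglyMeasurableAtFilter volume (nhds x)) hvc.continuousAt
    have h2 : HasDerivAt (fun t => ∫ y in (1:ℝ)..t, v y) (v x) x :=
      intervalIntegral.integral_hasDerivAt_right (hvc.intervalIntegrable 1 x)
        (hvc.stronglyMeasurableAtFilter volume (nhds x)) hvc.continuousAt
    have h2' : HasDerivAt (fun t => ∫ y in t..(1:ℝ), v y) (-v x) x := by
      have := h2.neg
      apply this.congr_of_eventuallyEq
      filter_upwards with t
      rw [intervalIntegral.integral_symm]; rfl
    exact h2'.sub h1
  have hgc : Continuous g := by
    rw [continuous_iff_continuousAt]; exact fun x => (hg x).continuousAt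
  -- rewrite inner integral
  have hstep1 : ∫ x in Set.Ioo (0:ℝ) 1, ∫ y in Set.Ioo (0:ℝ) 1,
      (1 - |x - y|) * deriv u x * deriv v y
      = ∫ x in Set.Ioo (0:ℝ) 1, deriv u x * g x := by
    apply setIntegral_congr_fun measurableSet_Ioo
    intro x hx
    show (∫ y in Set.Ioo (0:ℝ) 1, (1 - |x - y|) * deriv u x * deriv v y) = deriv u x * g x
    calc ∫ y in Set.Ioo (0:ℝ) 1, (1 - |x - y|) * deriv u x * deriv v y
        = ∫ y in Set.Ioo (0:ℝ) 1, deriv u x * ((1 - |x - y|) * deriv v y) := by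
          apply setIntegral_congr_fun measurableSet_Ioo
          intro y _
          show (1 - |x - y|) * deriv u x * deriv v y = _
          ring
      _ = deriv u x * ∫ y in Set.Ioo (0:ℝ) 1, (1 - |x - y|) * deriv v y :=
          integral_const_mul _ _
      _ = deriv u x * g x := by
          rw [inner_ibp hv (Set.Ioo_subset_Icc_self hx)]
  rw [hstep1, ← integral_Ioc_eq_integral_Ioo,
    ← intervalIntegral.integral_of_le (by norm_num : (0:ℝ) ≤ 1)]
  -- integration by parts
  have hibp : ∫ x in (0:ℝ)..1, (deriv u x * g x + u x * (-v x - v x)) = 0 := by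
    rw [intervalIntegral.integral_deriv_mul_eq_sub
      (fun x _ => hderivu x) (fun x _ => hg x)
      (hud.intervalIntegrable 0 1)
      (((hvc.neg.sub hvc)).intervalIntegrable 0 1)]
    simp [hu0, hu1]
  have hsplit : ∫ x in (0:ℝ)..1, (deriv u x * g x + u x * (-v x - v x))
      = (∫ x in (0:ℝ)..1, deriv u x * g x) + ∫ x in (0:ℝ)..1, u x * (-v x - v x) :=
    intervalIntegral.integral_add ((hud.mul hgc).intervalIntegrable 0 1)
      ((huc.mul (hvc.neg.sub hvc)).intervalIntegrable 0 1)
  have hlast : ∫ x in (0:ℝ)..1, u x * (-v x - v x)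
      = -(2 * ∫ x in (0:ℝ)..1, u x * v x) := by
    rw [intervalIntegral.integral_congr (g := fun x => -(2 * (u x * v x)))
      (fun x _ => by show u x * (-v x - v x) = _; ring),
      intervalIntegral.integral_neg, intervalIntegral.integral_const_mul]
  have : (∫ x in (0:ℝ)..1, deriv u x * g x) = 2 * ∫ x in (0:ℝ)..1, u x * v x := by
    rw [hsplit, hlast] at hibp
    linarith
  rw [this, intervalIntegral.integral_of_le (by norm_num : (0:ℝ) ≤ 1),
    integral_Ioc_eq_integral_Ioo]

theorem one_minus_abs_kernel_bilinear_identity_and_wellposedness :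
    (∀ u v : ℝ → ℝ, IsTest1D (Set.Ioo 0 1) u → IsTest1D (Set.Ioo 0 1) v →
      ∫ x in Set.Ioo (0:ℝ) 1, ∫ y in Set.Ioo (0:ℝ) 1,
          (1 - |x - y|) * deriv u x * deriv v y
        = 2 * ∫ x in Set.Ioo (0:ℝ) 1, u x * v x)
    ∧ (∀ u : ℝ → ℝ, IsTest1D (Set.Ioo 0 1) u →
        Real.sqrt (∫ x in Set.Ioo (0:ℝ) 1, ∫ y in Set.Ioo (0:ℝ) 1,
            (1 - |x - y|) * deriv u x * deriv u y)
          = Real.sqrt 2 * Real.sqrt (∫ x in Set.Ioo (0:ℝ) 1, (u x) ^ 2))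
    ∧ (∀ f : Lp ℝ 2 (volume.restrict (Set.Ioo (0:ℝ) 1)),
        (∀ v : Lp ℝ 2 (volume.restrict (Set.Ioo (0:ℝ) 1)),
          2 * ⟪(2:ℝ)⁻¹ • f, v⟫ = ⟪f, v⟫)
        ∧ ∀ w : Lp ℝ 2 (volume.restrict (Set.Ioo (0:ℝ) 1)),
            (∀ v, (2:ℝ) * ⟪w, v⟫ = ⟪f, v⟫) → w = (2:ℝ)⁻¹ • f) := by
  refine ⟨fun u v hu hv => bilinear_identity hu hv, fun u hu => ?_, fun f => ⟨fun v => ?_, fun w hw => ?_⟩⟩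
  · rw [bilinear_identity hu hu, ← Real.sqrt_mul (by norm_num : (0:ℝ) ≤ 2)]
    have heq : ∫ x in Set.Ioo (0:ℝ) 1, u x * u x = ∫ x in Set.Ioo (0:ℝ) 1, (u x) ^ 2 := by
      apply setIntegral_congr_fun measurableSet_Ioo
      intro x _
      show u x * u x = u x ^ 2
      ring
    rw [heq]
  · rw [real_inner_smul_left]
    ring
  · have h0 : ⟪(2:ℝ) • w - f, (2:ℝ) • w - f⟫ = 0 := by
      rw [inner_sub_left, real_inner_smul_left]
      have := hw ((2:ℝ) • w - f)
      linarith
    have h1 : (2:ℝ) • w - f = 0 := inner_self_eq_zero.mp h0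
    have h2 : (2:ℝ) • w = f := sub_eq_zero.mp h1
    rw [← h2, smul_smul]
    norm_num
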